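/- In a real Hilbert space X with bounded bilinear forms: if f_λ satisfies λ(f_λ, v)_X + b(f_λ, v) = λ(0,v) + b(f*, v) + ℓ(v) for all v, where b is a positive semidefinite symmetric bilinear form and ℓ a linear functional, then the energy norm error satisfies (λ‖f_λ - f*‖_X² + b(f_λ - f*, f_λ - f*))^{1/2} ≤ λ^{1/2}‖f*‖_X + sup_{v≠0} ℓ(v)/(λ‖v‖_X² + b(v,v))^{1/2}. -/

import Mathlib

/-!
Subtracting `b(f*, v) + λ(f*, v)_X` from the normal equations gives the error equation
`λ(e, v)_X + b(e, v) = ℓ(v) - λ(f*, v)_X` for `e = f_λ - f*`. Testing it with `v = e` gives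
`|||e|||² = ℓ(e) - λ(f*, e)_X ≤ S |||e||| + λ^{1/2}‖f*‖ · λ^{1/2}‖e‖`, and the last factor is
at most `|||e|||`. Here `S ≥ 0` is the dual norm of `ℓ` with respect to `|||·|||`; dividing by
`|||e|||` concludes.
-/

open scoped RealInnerProductSpace

theorem Real.iSup_nonneg_of_neg {ι : Type*} (f : ι → ℝ) (σ : ι → ι)
    (hσ : ∀ i, f (σ i) = -f i) : 0 ≤ ⨆ i, f i := by
  rcases isEmpty_or_nonempty ι with hι | ⟨⟨i⟩⟩
  · simp
  by_cases hf : BddAbove (Set.range f)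
  · have hi := le_ciSup hf i
    have hσi := le_ciSup hf (σ i)
    rw [hσ] at hσi
    linarith
  · rw [Real.iSup_of_not_bddAbove hf]

theorem le_of_sq_le_mul {x c : ℝ} (hc : 0 ≤ c) (h : x ^ 2 ≤ c * x) : x ≤ c := by
  nlinarith

section EnergyNorm

variable {X : Type*} [NormedAddCommGroup X] [InnerProductSpace ℝ X]
  (b : X →L[ℝ] X →L[ℝ] ℝ) (lam : ℝ)

noncomputable def energyNorm (v : X) : ℝ := √(lam * ‖v‖ ^ 2 + b v v)

variable {b lam}

@[simp]
theorem energyNorm_neg (v : X) : energyNorm b lam (-v) = energyNorm b lam v := by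
  simp [energyNorm]

theorem energyNorm_sq (hlam : 0 ≤ lam) (hpsd : ∀ v : X, 0 ≤ b v v) (v : X) :
    energyNorm b lam v ^ 2 = lam * ‖v‖ ^ 2 + b v v :=
  Real.sq_sqrt (add_nonneg (by positivity) (hpsd v))

theorem sqrt_mul_norm_le_energyNorm (hlam : 0 ≤ lam) (hpsd : ∀ v : X, 0 ≤ b v v) (v : X) :
    √lam * ‖v‖ ≤ energyNorm b lam v := by
  refine Real.le_sqrt_of_sq_le ?_
  rw [mul_pow, Real.sq_sqrt hlam]
  linarith [hpsd v]

theorem energyNorm_pos (hlam : 0 < lam) (hpsd : ∀ v : X, 0 ≤ b v v) {v : X} (hv : v ≠ 0) :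
    0 < energyNorm b lam v :=
  lt_of_lt_of_le (by positivity) (sqrt_mul_norm_le_energyNorm hlam.le hpsd v)

theorem div_energyNorm_le_opNorm_div_sqrt (ℓ : X →L[ℝ] ℝ) (hlam : 0 < lam)
    (hpsd : ∀ v : X, 0 ≤ b v v) {v : X} (hv : v ≠ 0) :
    ℓ v / energyNorm b lam v ≤ ‖ℓ‖ / √lam := by
  rw [div_le_div_iff₀ (energyNorm_pos hlam hpsd hv) (Real.sqrt_pos.mpr hlam)]
  calc ℓ v * √lam ≤ ‖ℓ‖ * ‖v‖ * √lam := by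
        gcongr
        exact (le_abs_self _).trans (ℓ.le_opNorm v)
    _ = ‖ℓ‖ * (√lam * ‖v‖) := by ring
    _ ≤ ‖ℓ‖ * energyNorm b lam v := by
        gcongr
        exact sqrt_mul_norm_le_energyNorm hlam.le hpsd v

theorem le_iSup_div_energyNorm_mul (ℓ : X →L[ℝ] ℝ) (hlam : 0 < lam)
    (hpsd : ∀ v : X, 0 ≤ b v v) (v : X) :
    ℓ v ≤ (⨆ w : {w : X // w ≠ 0}, ℓ w / energyNorm b lam w) * energyNorm b lam v := by
  rcases eq_or_ne v 0 with rfl | hv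
  · simp [energyNorm]
  have hbdd : BddAbove (Set.range fun w : {w : X // w ≠ 0} => ℓ w / energyNorm b lam w) :=
    ⟨‖ℓ‖ / √lam, Set.forall_mem_range.mpr fun w =>
      div_energyNorm_le_opNorm_div_sqrt ℓ hlam hpsd w.2⟩
  rw [← div_le_iff₀ (energyNorm_pos hlam hpsd hv)]
  exact le_ciSup hbdd ⟨v, hv⟩

theorem iSup_div_energyNorm_nonneg (ℓ : X →L[ℝ] ℝ) :
    0 ≤ ⨆ w : {w : X // w ≠ 0}, ℓ w / energyNorm b lam w :=
  Real.iSup_nonneg_of_neg _ (fun w => ⟨-w, neg_ne_zero.mpr w.2⟩) fun w => by simp [neg_div]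

theorem tikhonov_error_eq {ℓ : X →L[ℝ] ℝ} {fstar flam : X}
    (heq : ∀ v : X, lam * ⟪flam, v⟫ + b flam v = b fstar v + ℓ v) (v : X) :
    lam * ⟪flam - fstar, v⟫ + b (flam - fstar) v = ℓ v - lam * ⟪fstar, v⟫ := by
  rw [inner_sub_left, map_sub, sub_apply]
  linarith [heq v]

end EnergyNorm

theorem tikhonov_energy_error_general {X : Type*} [NormedAddCommGroup X] [InnerProductSpace ℝ X]
    (b : X →L[ℝ] X →L[ℝ] ℝ) (ℓ : X →L[ℝ] ℝ)
    (hpsd : ∀ v : X, 0 ≤ b v v)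
    (lam : ℝ) (hlam : 0 < lam) (fstar flam : X)
    (heq : ∀ v : X, lam * ⟪flam, v⟫ + b flam v = b fstar v + ℓ v) :
    Real.sqrt (lam * ‖flam - fstar‖ ^ 2 + b (flam - fstar) (flam - fstar)) ≤
      Real.sqrt lam * ‖fstar‖ +
        ⨆ v : {v : X // v ≠ 0}, ℓ v / Real.sqrt (lam * ‖(v : X)‖ ^ 2 + b v v) := by
  change energyNorm b lam (flam - fstar) ≤
    √lam * ‖fstar‖ + ⨆ v : {v : X // v ≠ 0}, ℓ v / energyNorm b lam v
  set e := flam - fstar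
  set S := ⨆ v : {v : X // v ≠ 0}, ℓ v / energyNorm b lam v
  have hS : 0 ≤ S := iSup_div_energyNorm_nonneg ℓ
  have hfstar : lam * -⟪fstar, e⟫ ≤ (√lam * ‖fstar‖) * (√lam * ‖e‖) := by
    rw [mul_mul_mul_comm, Real.mul_self_sqrt hlam.le]
    gcongr
    exact (neg_le_abs _).trans (abs_real_inner_le_norm fstar e)
  refine le_of_sq_le_mul (by positivity) ?_
  calc energyNorm b lam e ^ 2 = ℓ e + lam * -⟪fstar, e⟫ := by
        rw [energyNorm_sq hlam.le hpsd, ← real_inner_self_eq_norm_sq, tikhonov_error_eq heq e]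
        ring
    _ ≤ S * energyNorm b lam e + (√lam * ‖fstar‖) * energyNorm b lam e := by
        refine add_le_add (le_iSup_div_energyNorm_mul ℓ hlam hpsd e) (hfstar.trans ?_)
        gcongr
        exact sqrt_mul_norm_le_energyNorm hlam.le hpsd e
    _ = (√lam * ‖fstar‖ + S) * energyNorm b lam e := by ring

theorem tikhonov_energy_error {X : Type*} [NormedAddCommGroup X] [InnerProductSpace ℝ X]
    [Nontrivial X] (b : X →L[ℝ] X →L[ℝ] ℝ) (ℓ : X →L[ℝ] ℝ)
    (hsymm : ∀ u v : X, b u v = b v u) (hpsd : ∀ v : X, 0 ≤ b v v)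
    (lam : ℝ) (hlam : 0 < lam) (fstar flam : X)
    (heq : ∀ v : X, lam * ⟪flam, v⟫ + b flam v = b fstar v + ℓ v) :
    Real.sqrt (lam * ‖flam - fstar‖ ^ 2 + b (flam - fstar) (flam - fstar)) ≤
      Real.sqrt lam * ‖fstar‖ +
        ⨆ v : {v : X // v ≠ 0}, ℓ v / Real.sqrt (lam * ‖(v : X)‖ ^ 2 + b v v) :=
  tikhonov_energy_error_general b ℓ hpsd lam hlam fstar flam heq
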